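/- arXiv:2604.04519 — 5 statements merged into one kernel-verified Lean document; each statement's English description precedes it below -/
import Mathlib

section
/- Let V be an r·ℓ-dimensional vector space over F_q with r ≥ 2, let H_1, ..., H_n ≤ V be ℓ-dimensional subspaces that are pairwise intersecting trivially, and let W ≤ V be a subspace of dimension (r-1)ℓ. Then the sum over j of dim(W ∩ H_j) is at most (q^{(r-1)ℓ} - 1)/(q - 1). -/
open FiniteDimensional Module

lemma aux_pow_bound (q d : ℕ) (hq : 2 ≤ q) : (q - 1) * d + 1 ≤ q ^ d := by
  induction d with
  | zero => simp
  | succ d ih =>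
    have h1 : 1 ≤ q ^ d := Nat.one_le_pow _ _ (by omega)
    have h2 : (q - 1) * 1 ≤ (q - 1) * q ^ d := Nat.mul_le_mul_left _ h1
    have : (q - 1) * (d + 1) + 1 = ((q - 1) * d + 1) + (q - 1) * 1 := by ring
    rw [this, pow_succ]
    have hqq : q ^ d + (q - 1) * q ^ d = q ^ d * q := by
      have : q ^ d + (q - 1) * q ^ d = (1 + (q - 1)) * q ^ d := by ring
      rw [this]; have : 1 + (q - 1) = q := by omega
      rw [this, Nat.mul_comm]
    omega

/-- Projective counting bound: if `V` is an `rℓ`-dimensional vector space over `F_q`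
with `r ≥ 2`, `H_1, …, H_n ≤ V` are `ℓ`-dimensional subspaces pairwise intersecting
trivially, and `W ≤ V` has dimension `(r-1)ℓ`, then
`∑_j dim(W ⊓ H_j) ≤ (q^((r-1)ℓ) - 1)/(q - 1)`. -/
theorem stmt_1 (q r ℓ n : ℕ) (F : Type*) [Field F] [Fintype F]
    (hq : Fintype.card F = q)
    (V : Type*) [AddCommGroup V] [Module F V] [FiniteDimensional F V]
    (hV : Module.finrank F V = r * ℓ) (hr : 2 ≤ r)
    (H : Fin n → Submodule F V)
    (hHdim : ∀ j, Module.finrank F (H j) = ℓ)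
    (hpair : ∀ a b : Fin n, a ≠ b → H a ⊓ H b = ⊥)
    (W : Submodule F V) (hW : Module.finrank F W = (r - 1) * ℓ) :
    ∑ j : Fin n, Module.finrank F ↥(W ⊓ H j) ≤ (q ^ ((r - 1) * ℓ) - 1) / (q - 1) := by
  classical
  have hq2 : 2 ≤ q := hq ▸ Fintype.one_lt_card
  haveI : Finite V := Module.finite_of_finite F
  haveI : Fintype V := Fintype.ofFinite V
  have hcard : ∀ (U : Submodule F V), ((U : Set V).toFinset).card = q ^ finrank F U := by
    intro U
    rw [Set.toFinset_card, ← hq]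
    exact card_eq_pow_finrank
  set S : Fin n → Finset V := fun j => ((W ⊓ H j : Submodule F V) : Set V).toFinset \ {0}
    with hS
  have hScard : ∀ j, (S j).card = q ^ finrank F ↥(W ⊓ H j) - 1 := by
    intro j
    rw [hS]
    simp only
    rw [Finset.card_sdiff_of_subset (by simp [Submodule.zero_mem]), hcard]
    simp
  -- pairwise disjoint
  have hdisj : ∀ a ∈ Finset.univ, ∀ b ∈ Finset.univ, a ≠ b → Disjoint (S a) (S b) := by
    intro a _ b _ hab
    rw [Finset.disjoint_left]
    intro x hxa hxb
    simp only [hS, Finset.mem_sdiff, Set.mem_toFinset, SetLike.mem_coe,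
      Finset.mem_singleton] at hxa hxb
    have hx : x ∈ H a ⊓ H b := ⟨hxa.1.2, hxb.1.2⟩
    rw [hpair a b hab] at hx
    exact hxa.2 (by simpa using hx)
  have hsub : (Finset.univ.biUnion S) ⊆ (W : Set V).toFinset \ {0} := by
    intro x hx
    rw [Finset.mem_biUnion] at hx
    obtain ⟨j, _, hxj⟩ := hx
    simp only [hS, Finset.mem_sdiff, Set.mem_toFinset, SetLike.mem_coe,
      Finset.mem_singleton] at hxj ⊢
    exact ⟨hxj.1.1, hxj.2⟩
  have hsum : ∑ j : Fin n, (S j).card ≤ ((W : Set V).toFinset \ {0}).card := by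
    rw [← Finset.card_biUnion hdisj]
    exact Finset.card_le_card hsub
  have hWcard : ((W : Set V).toFinset \ {0}).card = q ^ ((r - 1) * ℓ) - 1 := by
    rw [Finset.card_sdiff_of_subset (by simp [Submodule.zero_mem]), hcard, hW]
    simp
  rw [hWcard] at hsum
  -- so ∑ (q^{d_j} - 1) ≤ q^{(r-1)ℓ} - 1
  have key : ∑ j : Fin n, (q ^ finrank F ↥(W ⊓ H j) - 1) ≤ q ^ ((r - 1) * ℓ) - 1 := by
    calc ∑ j : Fin n, (q ^ finrank F ↥(W ⊓ H j) - 1) = ∑ j : Fin n, (S j).card := by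
          exact Finset.sum_congr rfl fun j _ => (hScard j).symm
      _ ≤ _ := hsum
  have hmul : (q - 1) * ∑ j : Fin n, finrank F ↥(W ⊓ H j) ≤ q ^ ((r - 1) * ℓ) - 1 := by
    rw [Finset.mul_sum]
    calc ∑ j : Fin n, (q - 1) * finrank F ↥(W ⊓ H j)
        ≤ ∑ j : Fin n, (q ^ finrank F ↥(W ⊓ H j) - 1) := by
          apply Finset.sum_le_sum
          intro j _
          have := aux_pow_bound q (finrank F ↥(W ⊓ H j)) hq2
          omega
      _ ≤ _ := key
  rw [Nat.le_div_iff_mul_le (by omega : 0 < q - 1)]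
  linarith [hmul, Nat.mul_comm (q - 1) (∑ j : Fin n, finrank F ↥(W ⊓ H j))]
end

section
/- For b ∈ F_{q^ℓ}^× let W_b = {(x, b x^q) : x ∈ F_{q^ℓ}} and for c ∈ F_{q^ℓ} let H_c = {(x, cx) : x ∈ F_{q^ℓ}}, both viewed as F_q-subspaces of F_{q^ℓ}^2. Then W_b ∩ H_c ≠ {0} if and only if c ∈ b·Σ, where Σ is the kernel of the norm map F_{q^ℓ}^× → F_q^×; and whenever this holds, dim_{F_q}(W_b ∩ H_c) = 1. -/
/-!
A nonzero point of `H_c` is `(x, c x)` with `x ≠ 0`, and it lies on `W_b` iff `c = b x^(q-1)`.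
The `(q-1)`-th powers in `Kˣ` are exactly the units of norm one (Hilbert 90 for finite fields):
both subgroups of the cyclic group `Kˣ` have index `q - 1`, the kernel because the norm is onto
`Fˣ`. Two points `x₀, x` of the intersection satisfy `(x / x₀)^q = x / x₀`, so `x / x₀ ∈ F` and
the intersection is an `F`-line.
-/

namespace FiniteField

variable {F K : Type*} [Field F] [Field K] [Algebra F K]

theorem range_powMonoidHom_card_sub_one_eq_ker_norm [Finite K] :
    (powMonoidHom (Nat.card F - 1) : Kˣ →* Kˣ).range =
      (Units.map (Algebra.norm F : K →* F)).ker := by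
  have : Finite F := Finite.of_injective _ (algebraMap F K).injective
  have hle : (powMonoidHom (Nat.card F - 1) : Kˣ →* Kˣ).range ≤
      (Units.map (Algebra.norm F : K →* F)).ker := by
    rintro _ ⟨x, rfl⟩
    rw [MonoidHom.mem_ker, powMonoidHom_apply, map_pow, ← Nat.card_units, pow_card_eq_one']
  have hker : Nat.card (Units.map (Algebra.norm F : K →* F)).ker * (Nat.card F - 1) =
      Nat.card Kˣ := by
    rw [← Subgroup.card_mul_index (Units.map (Algebra.norm F : K →* F)).ker, Subgroup.index_ker,
      MonoidHom.range_eq_top.2 (unitsMap_norm_surjective F K), Subgroup.card_top, Nat.card_units]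
  refine Subgroup.eq_of_le_of_card_ge hle (le_of_eq ?_)
  rw [IsCyclic.card_powMonoidHom_range, Nat.gcd_eq_right (Dvd.intro_left _ hker),
    ← hker, Nat.mul_div_cancel _ (Nat.sub_pos_of_lt Finite.one_lt_card)]

theorem norm_eq_one_iff_exists_pow_card_sub_one [Finite K] {u : K} :
    Algebra.norm F u = 1 ↔ ∃ x : K, x ≠ 0 ∧ x ^ (Nat.card F - 1) = u := by
  constructor
  · intro hu
    have hu0 : u ≠ 0 := by rintro rfl; simp at hu
    obtain ⟨x, hx⟩ : Units.mk0 u hu0 ∈ (powMonoidHom (Nat.card F - 1) : Kˣ →* Kˣ).range := by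
      rw [range_powMonoidHom_card_sub_one_eq_ker_norm, MonoidHom.mem_ker]
      exact Units.ext hu
    exact ⟨x, x.ne_zero, congrArg Units.val hx⟩
  · rintro ⟨x, hx, rfl⟩
    have h : (Units.mk0 x hx) ^ (Nat.card F - 1) ∈ (Units.map (Algebra.norm F : K →* F)).ker := by
      rw [← range_powMonoidHom_card_sub_one_eq_ker_norm]
      exact ⟨_, rfl⟩
    exact congrArg Units.val h

theorem mem_range_algebraMap_of_pow_card_eq [Fintype F] [Finite K] {t : K}
    (ht : t ^ Fintype.card F = t) : t ∈ Set.range (algebraMap F K) := by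
  rw [IsGalois.mem_range_algebraMap_iff_fixed]
  intro σ
  obtain ⟨n, rfl⟩ := (bijective_frobeniusAlgEquivOfAlgebraic_pow F K).2 σ
  rw [AlgEquiv.coe_pow]
  exact Function.iterate_fixed ht n

end FiniteField

section GraphIntersection

variable {F K : Type*} [Field F] [Field K] [Algebra F K] {q : ℕ} {b c : K}
  {Wb Hc : Submodule F (K × K)}

theorem mem_inf_iff_of_coe_eq (hWb : (Wb : Set (K × K)) = {p : K × K | p.2 = b * p.1 ^ q})
    (hHc : (Hc : Set (K × K)) = {p : K × K | p.2 = c * p.1}) {p : K × K} :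
    p ∈ Wb ⊓ Hc ↔ p.2 = c * p.1 ∧ b * p.1 ^ q = c * p.1 := by
  rw [Submodule.mem_inf, ← SetLike.mem_coe, hWb, ← SetLike.mem_coe, hHc]
  grind

theorem inf_ne_bot_iff_of_coe_eq (hWb : (Wb : Set (K × K)) = {p : K × K | p.2 = b * p.1 ^ q})
    (hHc : (Hc : Set (K × K)) = {p : K × K | p.2 = c * p.1}) :
    Wb ⊓ Hc ≠ ⊥ ↔ ∃ x : K, x ≠ 0 ∧ b * x ^ q = c * x := by
  rw [Submodule.ne_bot_iff]
  constructor
  · rintro ⟨p, hp, hp0⟩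
    obtain ⟨hp2, hp1⟩ := (mem_inf_iff_of_coe_eq hWb hHc).1 hp
    exact ⟨p.1, fun hx ↦ hp0 (Prod.ext hx (by simp [hp2, hx])), hp1⟩
  · rintro ⟨x, hx, h⟩
    exact ⟨(x, c * x), (mem_inf_iff_of_coe_eq hWb hHc).2 ⟨rfl, h⟩, fun h0 ↦ hx congr($h0.1)⟩

theorem mul_pow_eq_mul_iff_eq_mul_pow_sub_one (hq : q ≠ 0) {x : K} (hx : x ≠ 0) :
    b * x ^ q = c * x ↔ c = b * x ^ (q - 1) := by
  conv_lhs => rw [← Nat.sub_add_cancel (Nat.one_le_iff_ne_zero.2 hq), pow_succ, ← mul_assoc]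
  rw [mul_left_inj' hx, eq_comm]

theorem div_pow_eq_div_of_mul_pow_eq_mul (hb : b ≠ 0) {x₀ x : K} (hx₀ : x₀ ≠ 0)
    (h₀ : b * x₀ ^ q = c * x₀) (h : b * x ^ q = c * x) : (x / x₀) ^ q = x / x₀ := by
  rw [div_pow, div_eq_div_iff (pow_ne_zero _ hx₀) hx₀]
  refine mul_left_cancel₀ hb ?_
  linear_combination x₀ * h - x * h₀

theorem finrank_inf_eq_one_of_coe_eq [Fintype F] [Finite K] (hb : b ≠ 0)
    (hWb : (Wb : Set (K × K)) = {p : K × K | p.2 = b * p.1 ^ Fintype.card F})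
    (hHc : (Hc : Set (K × K)) = {p : K × K | p.2 = c * p.1}) {x₀ : K} (hx₀ : x₀ ≠ 0)
    (h₀ : b * x₀ ^ Fintype.card F = c * x₀) : Module.finrank F ↥(Wb ⊓ Hc) = 1 := by
  have hv : (x₀, c * x₀) ∈ Wb ⊓ Hc := (mem_inf_iff_of_coe_eq hWb hHc).2 ⟨rfl, h₀⟩
  have hv0 : (⟨_, hv⟩ : ↥(Wb ⊓ Hc)) ≠ 0 := fun h ↦ hx₀ congr(($h : K × K).1)
  refine (finrank_eq_one_iff_of_nonzero' _ hv0).2 ?_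
  rintro ⟨p, hp⟩
  obtain ⟨hp2, hp1⟩ := (mem_inf_iff_of_coe_eq hWb hHc).1 hp
  obtain ⟨s, hs⟩ := FiniteField.mem_range_algebraMap_of_pow_card_eq
    (div_pow_eq_div_of_mul_pow_eq_mul hb hx₀ h₀ hp1)
  refine ⟨s, Subtype.ext (Prod.ext ?_ ?_)⟩
  · simp [Algebra.smul_def, hs, div_mul_cancel₀ _ hx₀]
  · simp [Algebra.smul_def, hs, hp2, div_mul_cancel₀ _ hx₀, mul_left_comm]

end GraphIntersection

theorem stmt_6_general (q : ℕ) (F K : Type*) [Field F] [Field K] [Fintype F] [Fintype K]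
    [Algebra F K] (hF : Fintype.card F = q)
    (b c : K) (hb : b ≠ 0)
    (Wb Hc : Submodule F (K × K))
    (hWb : (Wb : Set (K × K)) = {p : K × K | p.2 = b * p.1 ^ q})
    (hHc : (Hc : Set (K × K)) = {p : K × K | p.2 = c * p.1}) :
    (Wb ⊓ Hc ≠ ⊥ ↔ ∃ u : K, (u ≠ 0 ∧ Algebra.norm F u = 1) ∧ c = b * u) ∧
      (Wb ⊓ Hc ≠ ⊥ → Module.finrank F ↥(Wb ⊓ Hc) = 1) := by
  subst hF
  refine ⟨?_, fun hne ↦ ?_⟩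
  · calc Wb ⊓ Hc ≠ ⊥ ↔ ∃ x : K, x ≠ 0 ∧ c = b * x ^ (Fintype.card F - 1) := by
          rw [inf_ne_bot_iff_of_coe_eq hWb hHc]
          exact exists_congr fun x ↦ and_congr_right
            (mul_pow_eq_mul_iff_eq_mul_pow_sub_one Fintype.card_ne_zero)
      _ ↔ ∃ u : K, Algebra.norm F u = 1 ∧ c = b * u := by
          simp_rw [FiniteField.norm_eq_one_iff_exists_pow_card_sub_one, Nat.card_eq_fintype_card]
          constructor
          · rintro ⟨x, hx, rfl⟩
            exact ⟨_, ⟨x, hx, rfl⟩, rfl⟩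
          · rintro ⟨_, ⟨x, hx, rfl⟩, rfl⟩
            exact ⟨x, hx, rfl⟩
      _ ↔ ∃ u : K, (u ≠ 0 ∧ Algebra.norm F u = 1) ∧ c = b * u := by
          refine exists_congr fun u ↦ and_congr_left' (and_iff_right_of_imp ?_).symm
          rintro h rfl
          simp at h
  · obtain ⟨x₀, hx₀, h₀⟩ := (inf_ne_bot_iff_of_coe_eq hWb hHc).1 hne
    exact finrank_inf_eq_one_of_coe_eq hb hWb hHc hx₀ h₀

/-- For `b ∈ F_{q^ℓ}ˣ`, `W_b = {(x, b x^q)}` and `H_c = {(x, cx)}` (as `F_q`-subspaces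
of `F_{q^ℓ}²`) satisfy: `W_b ∩ H_c ≠ {0}` iff `c ∈ b·Σ` where `Σ = ker(N)`, and in
that case `dim_{F_q}(W_b ∩ H_c) = 1`. -/
theorem stmt_6 (q ℓ : ℕ) (F K : Type*) [Field F] [Field K] [Fintype F] [Fintype K]
    [Algebra F K] (hF : Fintype.card F = q) (hK : Fintype.card K = q ^ ℓ)
    (b c : K) (hb : b ≠ 0)
    (Wb Hc : Submodule F (K × K))
    (hWb : (Wb : Set (K × K)) = {p : K × K | p.2 = b * p.1 ^ q})
    (hHc : (Hc : Set (K × K)) = {p : K × K | p.2 = c * p.1}) :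
    (Wb ⊓ Hc ≠ ⊥ ↔ ∃ u : K, (u ≠ 0 ∧ Algebra.norm F u = 1) ∧ c = b * u) ∧
      (Wb ⊓ Hc ≠ ⊥ → Module.finrank F ↥(Wb ⊓ Hc) = 1) :=
  stmt_6_general q F K hF b c hb Wb Hc hWb hHc
end

section
/- Let B be a family of t-element subsets of [n] such that the intersection of all members of B is empty and |B ∩ B'| ≤ 2 for all distinct B, B' ∈ B. Then n ≥ min(2t, 3t - 6). -/
/-- If `B` is a (nonempty) family of `t`-element subsets of `[n]` whose total
intersection is empty and such that `|B ∩ B'| ≤ 2` for all distinct members,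
then `n ≥ min(2t, 3t - 6)`. -/
theorem stmt_10 (n t : ℕ) (B : Finset (Finset (Fin n))) (hne : B.Nonempty)
    (hcard : ∀ s ∈ B, s.card = t)
    (hempty : B.inf id = ∅)
    (hpair : ∀ s ∈ B, ∀ s' ∈ B, s ≠ s' → (s ∩ s').card ≤ 2) :
    n ≥ min (2 * t) (3 * t - 6) := by
  by_cases hdist : ∃ s ∈ B, ∃ s' ∈ B, s ≠ s'
  · obtain ⟨s, hs, s', hs', hne'⟩ := hdist
    by_cases hI : s ∩ s' = ∅
    · -- disjoint pair: n ≥ 2t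
      have h1 : (s ∪ s').card + (s ∩ s').card = s.card + s'.card :=
        Finset.card_union_add_card_inter s s'
      have h2 : (s ∪ s').card ≤ n := by
        simpa using (Finset.card_le_univ (s ∪ s'))
      rw [hI, hcard s hs, hcard s' hs'] at h1
      simp at h1
      omega
    · -- pick x ∈ s ∩ s', and a set s₃ missing x
      obtain ⟨x, hx⟩ := Finset.nonempty_iff_ne_empty.mpr hI
      have hxnotinf : x ∉ B.inf id := by rw [hempty]; exact Finset.notMem_empty x
      have : ∃ s₃ ∈ B, x ∉ s₃ := by
        by_contra hc
        push_neg at hc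
        exact hxnotinf (Finset.mem_inf.mpr fun b hb => hc b hb)
      obtain ⟨s₃, hs₃, hxs₃⟩ := this
      have hxs : x ∈ s := (Finset.mem_inter.mp hx).1
      have hxs' : x ∈ s' := (Finset.mem_inter.mp hx).2
      have hn3 : s₃ ≠ s := fun h => hxs₃ (h ▸ hxs)
      have hn3' : s₃ ≠ s' := fun h => hxs₃ (h ▸ hxs')
      have c1 : (s ∩ s').card ≤ 2 := hpair s hs s' hs' hne'
      have c2 : (s ∩ s₃).card ≤ 2 := hpair s hs s₃ hs₃ (Ne.symm hn3)
      have c3 : (s' ∩ s₃).card ≤ 2 := hpair s' hs' s₃ hs₃ (Ne.symm hn3')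
      have h1 : (s ∪ s').card + (s ∩ s').card = s.card + s'.card :=
        Finset.card_union_add_card_inter s s'
      have h2 : ((s ∪ s') ∪ s₃).card + ((s ∪ s') ∩ s₃).card = (s ∪ s').card + s₃.card :=
        Finset.card_union_add_card_inter (s ∪ s') s₃
      have h3 : ((s ∪ s') ∩ s₃).card ≤ (s ∩ s₃).card + (s' ∩ s₃).card := by
        rw [Finset.union_inter_distrib_right]
        exact Finset.card_union_le _ _
      have h4 : ((s ∪ s') ∪ s₃).card ≤ n := by
        simpa using (Finset.card_le_univ ((s ∪ s') ∪ s₃))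
      rw [hcard s hs, hcard s' hs'] at h1
      rw [hcard s₃ hs₃] at h2
      omega
  · -- B is a singleton: t = 0
    push_neg at hdist
    obtain ⟨s, hs⟩ := hne
    have : s ⊆ B.inf id := Finset.le_inf fun b hb => (hdist s hs b hb).le
    rw [hempty] at this
    have : s = ∅ := Finset.subset_empty.mp this
    have ht : t = 0 := by rw [← hcard s hs, this, Finset.card_empty]
    simp [ht]
end

section
/- Let B_1, ..., B_m be subsets of [n] whose intersection is empty but such that for each r, the intersection of all B_s with s ≠ r is nonempty, and suppose |B_i ∩ B_j| ≤ 2 for all i ≠ j. Then m ≤ 4. -/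
/-- If `B_1, …, B_m ⊆ [n]` have empty total intersection, but the intersection of any
`m - 1` of them is nonempty, and `|B_i ∩ B_j| ≤ 2` for all `i ≠ j`, then `m ≤ 4`. -/
theorem stmt_11 (n m : ℕ) (B : Fin m → Finset (Fin n))
    (hempty : Finset.univ.inf B = ∅)
    (hmin : ∀ r : Fin m, ((Finset.univ.erase r).inf B).Nonempty)
    (hpair : ∀ i j : Fin m, i ≠ j → (B i ∩ B j).card ≤ 2) :
    m ≤ 4 := by
  by_contra h
  push_neg at h
  have hm : 5 ≤ m := h
  choose x hxmem using hmin
  have hx1 : ∀ r t : Fin m, t ≠ r → x r ∈ B t := by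
    intro r t ht
    exact Finset.mem_inf.mp (hxmem r) t (Finset.mem_erase.mpr ⟨ht, Finset.mem_univ t⟩)
  have hx2 : ∀ r : Fin m, x r ∉ B r := by
    intro r hr
    have : x r ∈ Finset.univ.inf B := by
      rw [Finset.mem_inf]
      intro t _
      rcases eq_or_ne t r with rfl | ht
      · exact hr
      · exact hx1 r t ht
    rw [hempty] at this
    exact absurd this (Finset.notMem_empty _)
  have hinj : Function.Injective x := by
    intro r s hrs
    by_contra hne
    exact hx2 r (hrs ▸ hx1 s r hne)
  set i : Fin m := ⟨0, by omega⟩ with hi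
  set j : Fin m := ⟨1, by omega⟩ with hj
  have h0 : i ≠ j := by simp [hi, hj, Fin.ext_iff]
  set s : Finset (Fin m) := (Finset.univ.erase i).erase j with hs
  have hsub : s.image x ⊆ B i ∩ B j := by
    intro y hy
    rcases Finset.mem_image.mp hy with ⟨r, hr, rfl⟩
    rw [hs, Finset.mem_erase, Finset.mem_erase] at hr
    exact Finset.mem_inter.mpr ⟨hx1 r i (fun e => hr.2.1 e.symm),
      hx1 r j (fun e => hr.1 e.symm)⟩
  have hcard : s.card = m - 2 := by
    rw [hs, Finset.card_erase_of_mem, Finset.card_erase_of_mem, Finset.card_univ,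
      Fintype.card_fin]
    · omega
    · exact Finset.mem_univ _
    · exact Finset.mem_erase.mpr ⟨h0.symm, Finset.mem_univ _⟩
  have hle : s.card ≤ (B i ∩ B j).card := by
    rw [← Finset.card_image_of_injective s hinj]
    exact Finset.card_le_card hsub
  have := hpair i j h0
  omega
end

section
/- Let q ≥ 3, r = ℓ = 2, and let Σ = ker(N_{F_{q^2}/F_q}) ⊆ F_{q^2}^×, with b_1, b_2 ∈ F_{q^2}^× of distinct norms, and C_1 = b_1Σ, C_2 = b_2Σ. For any set Ω ⊆ F_{q^2} ∪ {∞} with C_1 ∪ C_2 ⊆ Ω, define H_c = {(x, cx)} and H_∞ = {(0,y)} in F_{q^2}^2, and W_b = {(x, bx^q)}. Then for each c ∈ Ω: if c ∈ C_1, then W_{b_2} intersects H_c trivially and intersects H_d in a 1-dimensional space for exactly the q+1 indices d ∈ C_2; symmetrically for c ∈ C_2 with W_{b_1}; and for c ∉ C_1 ∪ C_2, W_{b_1} intersects H_c trivially and hits exactly the indices in C_1. -/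
/-!
Write `q = |F|`. The norm of `K = F_{q²}` over `F` is `x ↦ x ^ (q + 1)`, and since `Kˣ` is
cyclic of order `(q - 1)(q + 1)`, the norm-one elements are exactly the `(q - 1)`-st powers; there
are `q + 1` of them. Hence `c ∈ bΣ` iff `b x ^ q = c x` has a nonzero solution `x`, i.e. iff
`W_b ∩ H_c ≠ 0`. Two nonzero solutions have a quotient `t` with `t ^ q = t`, so `t ∈ F`, and
`W_b ∩ H_c` is then an `F`-line. Cosets of `Σ` with different norms are disjoint.
-/

open Module

theorem IsCyclic.range_powMonoidHom_eq_ker {G : Type*} [CommGroup G] [IsCyclic G] [Finite G]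
    {m k : ℕ} (h : Nat.card G = m * k) :
    (powMonoidHom m : G →* G).range = (powMonoidHom k).ker := by
  have hm : m ≠ 0 := by rintro rfl; exact Nat.card_pos.ne' (h.trans (zero_mul k))
  refine Subgroup.eq_of_le_of_card_ge ?_ ?_
  · rintro _ ⟨y, rfl⟩
    rw [MonoidHom.mem_ker, powMonoidHom_apply, powMonoidHom_apply, ← pow_mul, ← h,
      pow_card_eq_one']
  · rw [card_powMonoidHom_range, card_powMonoidHom_ker, h, Nat.gcd_mul_left_left,
      Nat.gcd_mul_right_left, Nat.mul_div_cancel_left _ (Nat.pos_of_ne_zero hm)]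

theorem Algebra.norm_eq_of_mem_image_mul {R S : Type*} [CommRing R] [Ring S] [Algebra R S]
    {b c : S} (hc : c ∈ (b * ·) '' {x : S | Algebra.norm R x = 1}) :
    Algebra.norm R c = Algebra.norm R b := by
  obtain ⟨s, hs, rfl⟩ := hc
  rw [map_mul, Set.mem_ofPred_eq.mp hs, mul_one]

theorem Nat.card_units_eq_of_card_eq_sq {K : Type*} [GroupWithZero K] [Fintype K] {n : ℕ}
    (hK : Fintype.card K = n ^ 2) : Nat.card Kˣ = (n - 1) * (n + 1) := by
  rw [Nat.card_units, Nat.card_eq_fintype_card, hK, mul_comm, ← Nat.sq_sub_sq, one_pow]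

namespace FiniteField

variable {F K : Type*} [Field F] [Field K] [Fintype F] [Algebra F K]

theorem mem_range_algebraMap_of_pow_card_eq_self [Finite K] {x : K}
    (hx : x ^ Fintype.card F = x) : x ∈ Set.range (algebraMap F K) := by
  rw [IsGalois.mem_range_algebraMap_iff_fixed]
  intro f
  obtain ⟨n, rfl⟩ := (bijective_frobeniusAlgEquivOfAlgebraic_pow F K).2 f
  rw [AlgEquiv.coe_pow]
  exact Function.iterate_fixed hx n

section Quadratic

variable [Fintype K] (hK : Fintype.card K = Fintype.card F ^ 2)
include hK

theorem algebraMap_norm_eq_pow_card_add_one (x : K) :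
    algebraMap F K (Algebra.norm F x) = x ^ (Fintype.card F + 1) := by
  rw [algebraMap_norm_eq_pow, ← Nat.card_units, Nat.card_units_eq_of_card_eq_sq hK,
    Nat.card_eq_fintype_card, Nat.mul_div_cancel_left _ (Nat.sub_pos_of_lt Fintype.one_lt_card)]

theorem norm_eq_one_iff_pow_card_add_one_eq_one {x : K} :
    Algebra.norm F x = 1 ↔ x ^ (Fintype.card F + 1) = 1 := by
  rw [← (algebraMap F K).injective.eq_iff, map_one, algebraMap_norm_eq_pow_card_add_one hK]

theorem exists_pow_card_sub_one_eq_iff_norm_eq_one {x : K} :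
    (∃ y : K, y ≠ 0 ∧ y ^ (Fintype.card F - 1) = x) ↔ Algebra.norm F x = 1 := by
  rw [norm_eq_one_iff_pow_card_add_one_eq_one hK]
  constructor
  · rintro ⟨y, hy, rfl⟩
    have := pow_card_eq_one' (x := Units.mk0 y hy)
    rw [Nat.card_units_eq_of_card_eq_sq hK, pow_mul, Units.ext_iff] at this
    simpa using this
  · intro hx
    have hx0 : x ≠ 0 := by rintro rfl; simp at hx
    have : Units.mk0 x hx0 ∈ (powMonoidHom (Fintype.card F + 1) : Kˣ →* Kˣ).ker := by
      simp [Units.ext_iff, hx]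
    rw [← IsCyclic.range_powMonoidHom_eq_ker (Nat.card_units_eq_of_card_eq_sq hK)] at this
    obtain ⟨y, hy⟩ := this
    exact ⟨y, y.ne_zero, by simpa [Units.ext_iff] using hy⟩

theorem card_norm_eq_one : Nat.card {x : K | Algebra.norm F x = 1} = Fintype.card F + 1 := by
  have : {x : K | Algebra.norm F x = 1} =
      Units.val '' ((powMonoidHom (Fintype.card F + 1) : Kˣ →* Kˣ).ker : Set Kˣ) := by
    ext x
    rw [Set.mem_ofPred_eq, norm_eq_one_iff_pow_card_add_one_eq_one hK]
    constructor
    · intro hx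
      have hx0 : x ≠ 0 := by rintro rfl; simp at hx
      exact ⟨Units.mk0 x hx0, by simp [Units.ext_iff, hx], rfl⟩
    · rintro ⟨u, hu, rfl⟩
      simpa [Units.ext_iff] using hu
  rw [this, Nat.card_image_of_injective Units.val_injective, SetLike.coe_sort_coe,
    IsCyclic.card_powMonoidHom_ker, Nat.card_units_eq_of_card_eq_sq hK, Nat.gcd_mul_left_left]

theorem card_image_mul_norm_eq_one {b : K} (hb : b ≠ 0) :
    Nat.card ((b * ·) '' {x : K | Algebra.norm F x = 1}) = Fintype.card F + 1 := by
  rw [Nat.card_image_of_injective (mul_right_injective₀ hb), card_norm_eq_one hK]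

theorem mem_image_mul_norm_eq_one_iff {b c : K} :
    c ∈ (b * ·) '' {x : K | Algebra.norm F x = 1} ↔
      ∃ x : K, x ≠ 0 ∧ b * x ^ Fintype.card F = c * x := by
  have hq : Fintype.card F - 1 + 1 = Fintype.card F := Nat.sub_add_cancel Fintype.card_pos
  constructor
  · rintro ⟨_, hs, rfl⟩
    obtain ⟨y, hy, rfl⟩ := (exists_pow_card_sub_one_eq_iff_norm_eq_one hK).2 hs
    exact ⟨y, hy, by rw [mul_assoc, ← pow_succ, hq]⟩
  · rintro ⟨x, hx, h⟩
    have hs := (exists_pow_card_sub_one_eq_iff_norm_eq_one hK).1 ⟨x, hx, rfl⟩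
    refine ⟨x ^ (Fintype.card F - 1), hs, mul_right_cancel₀ hx ?_⟩
    rw [mul_assoc, ← pow_succ, hq, h]

end Quadratic

section FrobeniusGraph

variable {b c : K} {W H : Submodule F (K × K)}
  (hW : (W : Set (K × K)) = {p | p.2 = b * p.1 ^ Fintype.card F})
  (hH : (H : Set (K × K)) = {p | p.2 = c * p.1})
include hW hH

theorem inf_eq_bot_of_not_exists (h : ¬∃ x : K, x ≠ 0 ∧ b * x ^ Fintype.card F = c * x) :
    W ⊓ H = ⊥ := by
  rw [eq_bot_iff]
  rintro ⟨x, y⟩ hp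
  rw [← SetLike.mem_coe, Submodule.coe_inf, hW, hH] at hp
  obtain ⟨h₁, h₂⟩ := hp
  obtain rfl : x = 0 := by
    by_contra hx
    exact h ⟨x, hx, h₁.symm.trans h₂⟩
  simp_all

theorem inf_eq_span_of_ne_zero [Finite K] (hb : b ≠ 0) {x₀ : K} (hx₀ : x₀ ≠ 0)
    (h : b * x₀ ^ Fintype.card F = c * x₀) : W ⊓ H = F ∙ (x₀, c * x₀) := by
  have hc : c ≠ 0 := by
    rintro rfl
    exact mul_ne_zero hb (pow_ne_zero _ hx₀) (h.trans (zero_mul x₀))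
  apply le_antisymm
  · rintro ⟨x, y⟩ hp
    rw [← SetLike.mem_coe, Submodule.coe_inf, hW, hH] at hp
    obtain ⟨h₁ : y = b * x ^ Fintype.card F, rfl : y = c * x⟩ := hp
    have hx : (x / x₀) ^ Fintype.card F = x / x₀ :=
      calc (x / x₀) ^ Fintype.card F = b * x ^ Fintype.card F / (b * x₀ ^ Fintype.card F) := by
            rw [div_pow, mul_div_mul_left _ _ hb]
        _ = c * x / (c * x₀) := by rw [← h₁, h]
        _ = x / x₀ := mul_div_mul_left _ _ hc
    obtain ⟨a, ha⟩ := mem_range_algebraMap_of_pow_card_eq_self hx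
    refine Submodule.mem_span_singleton.2 ⟨a, ?_⟩
    rw [Prod.smul_mk, Algebra.smul_def, Algebra.smul_def, ha, mul_left_comm,
      div_mul_cancel₀ x hx₀]
  · rw [Submodule.span_le, Set.singleton_subset_iff, Submodule.coe_inf, hW, hH]
    exact ⟨h.symm, rfl⟩

theorem finrank_inf_eq_one_iff [Finite K] (hb : b ≠ 0) :
    finrank F ↥(W ⊓ H) = 1 ↔ ∃ x : K, x ≠ 0 ∧ b * x ^ Fintype.card F = c * x := by
  constructor
  · intro h
    by_contra hne
    rw [inf_eq_bot_of_not_exists hW hH hne, finrank_bot] at h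
    exact zero_ne_one h
  · rintro ⟨x₀, hx₀, h⟩
    rw [inf_eq_span_of_ne_zero hW hH hb hx₀ h]
    exact finrank_span_singleton (by simp [hx₀])

end FrobeniusGraph

theorem inf_eq_bot_of_fst_eq_zero {b : K} {W H : Submodule F (K × K)}
    (hW : (W : Set (K × K)) = {p | p.2 = b * p.1 ^ Fintype.card F})
    (hH : (H : Set (K × K)) = {p | p.1 = 0}) : W ⊓ H = ⊥ := by
  rw [eq_bot_iff]
  rintro ⟨x, y⟩ hp
  rw [← SetLike.mem_coe, Submodule.coe_inf, hW, hH] at hp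
  obtain ⟨rfl : y = b * x ^ Fintype.card F, rfl : x = 0⟩ := hp
  simp [Fintype.card_ne_zero]

end FiniteField

theorem stmt_18_general (q : ℕ) (F K : Type*) [Field F] [Field K] [Fintype F] [Fintype K]
    [Algebra F K] (hF : Fintype.card F = q) (hK : Fintype.card K = q ^ 2)
    (b₁ b₂ : K) (hb₁ : b₁ ≠ 0) (hb₂ : b₂ ≠ 0)
    (hbnorm : Algebra.norm F b₁ ≠ Algebra.norm F b₂)
    (Sig C₁ C₂ : Set K)
    (hSig : Sig = {x : K | x ≠ 0 ∧ Algebra.norm F x = 1})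
    (hC₁ : C₁ = (b₁ * ·) '' Sig) (hC₂ : C₂ = (b₂ * ·) '' Sig)
    (Ω : Set (Option K))
    (H : Option K → Submodule F (K × K))
    (hHs : ∀ c : K, (H (some c) : Set (K × K)) = {p : K × K | p.2 = c * p.1})
    (hHinf : (H none : Set (K × K)) = {p : K × K | p.1 = 0})
    (W : K → Submodule F (K × K))
    (hW : ∀ b : K, (W b : Set (K × K)) = {p : K × K | p.2 = b * p.1 ^ q}) :
    Nat.card ↥C₁ = q + 1 ∧ Nat.card ↥C₂ = q + 1 ∧
      (∀ c : K, some c ∈ Ω → c ∈ C₁ → W b₂ ⊓ H (some c) = ⊥) ∧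
      (∀ d : K, Module.finrank F ↥(W b₂ ⊓ H (some d)) = 1 ↔ d ∈ C₂) ∧
      (∀ c : K, some c ∈ Ω → c ∈ C₂ → W b₁ ⊓ H (some c) = ⊥) ∧
      (∀ d : K, Module.finrank F ↥(W b₁ ⊓ H (some d)) = 1 ↔ d ∈ C₁) ∧
      (∀ c ∈ Ω, (∀ e : K, c = some e → e ∉ C₁ ∪ C₂) → W b₁ ⊓ H c = ⊥) := by
  subst hF hC₁ hC₂
  replace hSig : Sig = {x : K | Algebra.norm F x = 1} :=
    hSig ▸ Set.ext fun x ↦ and_iff_right_of_imp fun hx hx0 ↦ by simp [hx0] at hx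
  have finrank_eq_one_iff (b d : K) (hb : b ≠ 0) :
      finrank F ↥(W b ⊓ H (some d)) = 1 ↔ d ∈ (b * ·) '' Sig := by
    rw [FiniteField.finrank_inf_eq_one_iff (hW b) (hHs d) hb, hSig,
      FiniteField.mem_image_mul_norm_eq_one_iff hK]
  have inf_eq_bot (b d : K) (hd : d ∉ (b * ·) '' Sig) : W b ⊓ H (some d) = ⊥ := by
    rw [hSig, FiniteField.mem_image_mul_norm_eq_one_iff hK] at hd
    exact FiniteField.inf_eq_bot_of_not_exists (hW b) (hHs d) hd
  have disjoint {c : K} (h₁ : c ∈ (b₁ * ·) '' Sig) (h₂ : c ∈ (b₂ * ·) '' Sig) : False := by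
    rw [hSig] at h₁ h₂
    exact hbnorm <| (Algebra.norm_eq_of_mem_image_mul h₁).symm.trans
      (Algebra.norm_eq_of_mem_image_mul h₂)
  refine ⟨hSig ▸ FiniteField.card_image_mul_norm_eq_one hK hb₁,
    hSig ▸ FiniteField.card_image_mul_norm_eq_one hK hb₂,
    fun c _ hc ↦ inf_eq_bot b₂ c (disjoint hc), fun d ↦ finrank_eq_one_iff b₂ d hb₂,
    fun c _ hc ↦ inf_eq_bot b₁ c (disjoint · hc), fun d ↦ finrank_eq_one_iff b₁ d hb₁,
    ?_⟩
  rintro (_ | e) _ hc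
  · exact FiniteField.inf_eq_bot_of_fst_eq_zero (hW b₁) hHinf
  · exact inf_eq_bot b₁ e fun he ↦ hc e rfl (Or.inl he)

/-- Key two-parity step (`q ≥ 3`, `r = ℓ = 2`): with `Σ = ker(N_{F_{q²}/F_q})`,
`C₁ = b₁Σ`, `C₂ = b₂Σ` for `b₁, b₂` of distinct norms, and `Ω ⊆ F_{q²} ∪ {∞}`
containing `C₁ ∪ C₂`, each node `c ∈ Ω` admits a repair subspace: for `c ∈ C₁`,
`W_{b₂}` misses `H_c` and meets `H_d` in a line exactly for the `q + 1` indices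
`d ∈ C₂`; symmetrically for `c ∈ C₂` with `W_{b₁}`; and for `c ∉ C₁ ∪ C₂` (including
`∞`), `W_{b₁}` misses `H_c` and hits exactly the indices in `C₁`. -/
theorem stmt_18 (q : ℕ) (F K : Type*) [Field F] [Field K] [Fintype F] [Fintype K]
    [Algebra F K] (hF : Fintype.card F = q) (hK : Fintype.card K = q ^ 2)
    (hq : 3 ≤ q)
    (b₁ b₂ : K) (hb₁ : b₁ ≠ 0) (hb₂ : b₂ ≠ 0)
    (hbnorm : Algebra.norm F b₁ ≠ Algebra.norm F b₂)
    (Sig C₁ C₂ : Set K)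
    (hSig : Sig = {x : K | x ≠ 0 ∧ Algebra.norm F x = 1})
    (hC₁ : C₁ = (b₁ * ·) '' Sig) (hC₂ : C₂ = (b₂ * ·) '' Sig)
    (Ω : Set (Option K)) (hΩ : ∀ d ∈ C₁ ∪ C₂, some d ∈ Ω)
    (H : Option K → Submodule F (K × K))
    (hHs : ∀ c : K, (H (some c) : Set (K × K)) = {p : K × K | p.2 = c * p.1})
    (hHinf : (H none : Set (K × K)) = {p : K × K | p.1 = 0})
    (W : K → Submodule F (K × K))
    (hW : ∀ b : K, (W b : Set (K × K)) = {p : K × K | p.2 = b * p.1 ^ q}) :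
    Nat.card ↥C₁ = q + 1 ∧ Nat.card ↥C₂ = q + 1 ∧
      (∀ c : K, some c ∈ Ω → c ∈ C₁ → W b₂ ⊓ H (some c) = ⊥) ∧
      (∀ d : K, Module.finrank F ↥(W b₂ ⊓ H (some d)) = 1 ↔ d ∈ C₂) ∧
      (∀ c : K, some c ∈ Ω → c ∈ C₂ → W b₁ ⊓ H (some c) = ⊥) ∧
      (∀ d : K, Module.finrank F ↥(W b₁ ⊓ H (some d)) = 1 ↔ d ∈ C₁) ∧
      (∀ c ∈ Ω, (∀ e : K, c = some e → e ∉ C₁ ∪ C₂) → W b₁ ⊓ H c = ⊥) :=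
  stmt_18_general q F K hF hK b₁ b₂ hb₁ hb₂ hbnorm Sig C₁ C₂ hSig hC₁ hC₂ Ω H hHs hHinf W hW
end
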